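/- arXiv:1503.07251 — 4 statements merged into one kernel-verified Lean document; each statement's English description precedes it below -/
import Mathlib

section
/- Let F be a free abelian group and let p_1, ..., p_l be finitely many nonzero elements of the integral group ring ℤ[F]. Then there exists a prime number q and a group homomorphism α : F → ℤ/qℤ such that for every j ∈ {1, ..., q−1}, the ring homomorphism ℤ[F] → ℂ induced by the character g ↦ exp(2πi·j·α(g)/q) sends each of p_1, ..., p_l to a nonzero complex number. -/
/-!
A linear form `β : F → ℤ` injective on the finitely many monomials occurring in the `p i` turns
each `p i` into a nonzero Laurent polynomial in one variable with exponents in `[-M, M]`.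
Taking `α = β mod q`, the character sends `g` to `ω ^ β g` with `ω = exp (2πi j / q)` a primitive
`q`-th root of unity, so the image of `p i` is `ω ^ (-M)` times the value at `ω` of a nonzero
integer polynomial of degree at most `2M`. For a prime `q > 2M + 1` this is below `q - 1`, the
degree of the minimal polynomial `Φ_q` of `ω`, so the value is nonzero.
-/

section

open Polynomial Real Complex

theorem Module.Projective.exists_dual_int_forall_mem_ne_zero {M : Type*} [AddCommGroup M]
    [Module.Projective ℤ M] (D : Finset M) (hD : ∀ v ∈ D, v ≠ 0) :
    ∃ f : Module.Dual ℤ M, ∀ v ∈ D, f v ≠ 0 := by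
  classical
  induction D using Finset.induction_on with
  | empty => exact ⟨0, by simp⟩
  | @insert a D _ ih =>
    obtain ⟨f, hf⟩ := ih fun v hv => hD v (Finset.mem_insert_of_mem hv)
    obtain ⟨g, hg⟩ := exists_dual_ne_zero ℤ (hD a (Finset.mem_insert_self a D))
    -- `N • f` outweighs `g` at every `v` with `f v ≠ 0`, while `g` rescues `a` if `f a = 0`.
    set N : ℕ := (insert a D).sup (fun v => (g v).natAbs) + 1
    refine ⟨N • f + g, fun v hv => ?_⟩
    have hgv : (g v).natAbs < N :=
      Nat.lt_succ_of_le (Finset.le_sup (f := fun v => (g v).natAbs) hv)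
    have of_ne_zero : f v ≠ 0 → (N • f + g) v ≠ 0 := by
      intro hfv hv0
      have : N * (f v).natAbs = (g v).natAbs := by
        rw [← Int.natAbs_natCast N, ← Int.natAbs_mul, ← Int.natAbs_neg (g v)]
        simp only [LinearMap.add_apply, LinearMap.smul_apply, nsmul_eq_mul] at hv0
        congr 1
        omega
      have := Nat.le_mul_of_pos_right N (Int.natAbs_pos.mpr hfv)
      omega
    rcases Finset.mem_insert.mp hv with rfl | hvD
    · by_cases hfv : f v = 0
      · simpa [hfv] using hg
      · exact of_ne_zero hfv
    · exact of_ne_zero (hf v hvD)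

theorem Module.Projective.exists_dual_int_injOn {M : Type*} [AddCommGroup M]
    [Module.Projective ℤ M] (S : Finset M) : ∃ f : Module.Dual ℤ M, Set.InjOn f S := by
  classical
  obtain ⟨f, hf⟩ := exists_dual_int_forall_mem_ne_zero (S.offDiag.image fun x => x.1 - x.2) (by
    simp only [Finset.mem_image, Finset.mem_offDiag]
    rintro _ ⟨x, ⟨-, -, hne⟩, rfl⟩
    exact sub_ne_zero.mpr hne)
  refine ⟨f, fun x hx y hy hxy => by_contra fun hne => hf (x - y) ?_ (by simp [hxy])⟩
  exact Finset.mem_image_of_mem (fun x : M × M => x.1 - x.2) (a := (x, y))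
    (Finset.mem_offDiag.mpr ⟨hx, hy, hne⟩)

theorem Complex.exp_mul_val_intCast_div (q : ℕ) [NeZero q] (j : ℕ) (k : ℤ) :
    exp (2 * π * I * j * ((k : ZMod q).val : ℂ) / q) = exp (2 * π * I * (j / q)) ^ k := by
  calc exp (2 * π * I * j * ((k : ZMod q).val : ℂ) / q)
      = ZMod.stdAddChar (((j * (k : ZMod q).val : ℕ) : ℤ) : ZMod q) := by
        rw [ZMod.stdAddChar_coe]; push_cast; ring_nf
    _ = ZMod.stdAddChar ((j * k : ℤ) : ZMod q) := by
        push_cast [ZMod.natCast_val, ZMod.cast_id', id]; rfl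
    _ = exp (2 * π * I * (j / q)) ^ k := by
        rw [ZMod.stdAddChar_coe, ← Complex.exp_int_mul]; push_cast; ring_nf

theorem IsPrimitiveRoot.aeval_ne_zero_of_natDegree_lt {K : Type*} [Field K] [CharZero K]
    {q : ℕ} (hq : q.Prime) {ω : K} (hω : IsPrimitiveRoot ω q) {P : ℤ[X]} (hP : P ≠ 0)
    (hdeg : P.natDegree < q - 1) : aeval ω P ≠ 0 := by
  intro hroot
  have := natDegree_le_natDegree (minpoly.IsIntegrallyClosed.degree_le_of_ne_zero hP hroot)
  rw [← cyclotomic_eq_minpoly hω hq.pos, natDegree_cyclotomic, Nat.totient_prime hq] at this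
  omega

theorem IsPrimitiveRoot.sum_mul_zpow_ne_zero {K : Type*} [Field K] [CharZero K]
    {q : ℕ} (hq : q.Prime) {ω : K} (hω : IsPrimitiveRoot ω q) {c : ℤ →₀ ℤ} (hc : c ≠ 0)
    {m : ℤ} (hsupp : ↑c.support ⊆ Set.Ico m (m + (q - 1 : ℕ))) :
    c.sum (fun n a => (a : K) * ω ^ n) ≠ 0 := by
  classical
  set e : ℤ → ℕ := fun n => (n - m).toNat
  have he : Set.InjOn e c.support := fun a ha b hb hab => by
    have := hsupp ha; have := hsupp hb; simp only [Set.mem_Ico, e] at *; omega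
  set P : ℤ[X] := ofFinsupp (.ofCoeff (c.mapDomain e))
  have hP : P ≠ 0 := by
    rw [Ne, ofFinsupp_eq_zero, AddMonoidAlgebra.ofCoeff_eq_zero,
      ← Finsupp.mapDomain_zero (f := e)]
    exact fun h => hc (Finsupp.mapDomain_injOn _ he (fun _ h => h) (by simp) h)
  have hdeg : P.natDegree < q - 1 := by
    have hmem := natDegree_mem_support_of_nonzero hP
    rw [support_ofFinsupp] at hmem
    obtain ⟨n, hn, hne⟩ := Finset.mem_image.mp (Finsupp.mapDomain_support hmem)
    have := hsupp hn
    simp only [Set.mem_Ico, e] at this hne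
    omega
  have heval : aeval ω P = ω ^ (-m) * c.sum (fun n a => (a : K) * ω ^ n) := by
    rw [aeval_def, eval₂_eq_sum]
    simp only [P, Polynomial.sum_def, support_ofFinsupp, coeff_ofFinsupp]
    change (c.mapDomain e).sum (fun k a => algebraMap ℤ K a * ω ^ k) = _
    rw [Finsupp.sum_mapDomain_index (by simp) (by intros; simp [add_mul]), Finsupp.mul_sum]
    refine Finsupp.sum_congr fun n hn => ?_
    have hexp : ((e n : ℕ) : ℤ) = -m + n := by
      have := hsupp hn
      simp only [Set.mem_Ico, e] at this ⊢
      omega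
    rw [← zpow_natCast, hexp, zpow_add₀ (hω.ne_zero hq.ne_zero), algebraMap_int_eq, eq_intCast]
    ring
  intro h
  exact hω.aeval_ne_zero_of_natDegree_lt hq hP hdeg (by rw [heval, h, mul_zero])

end

/-- Let `F` be a free abelian group and `p 1, …, p l` finitely many nonzero
elements of the integral group ring `ℤ[F]` (the monoid algebra `AddMonoidAlgebra ℤ F`).
Then there exists a prime `q` and a group homomorphism `α : F → ℤ/qℤ` such that for every
`j ∈ {1, …, q-1}`, the ring homomorphism `ℤ[F] → ℂ` induced by the character
`g ↦ exp(2πi·j·α(g)/q)` (i.e. `Σ a_g·g ↦ Σ a_g·exp(2πi·j·α(g)/q)`) sends each `p i`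
to a nonzero complex number. -/
theorem stmt0 (F : Type*) [AddCommGroup F] [Module.Free ℤ F]
    (l : ℕ) (p : Fin l → AddMonoidAlgebra ℤ F) (hp : ∀ i, p i ≠ 0) :
    ∃ q : ℕ, q.Prime ∧ ∃ α : F →+ ZMod q,
      ∀ j ∈ Finset.Icc 1 (q - 1), ∀ i : Fin l,
        Finsupp.sum (p i).coeff (fun g a =>
          (a : ℂ) * Complex.exp (2 * Real.pi * Complex.I * (j : ℂ) * ((α g).val : ℂ) / (q : ℂ)))
          ≠ 0 := by
  classical
  set S := Finset.univ.biUnion fun i => (p i).coeff.support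
  obtain ⟨β, hβ⟩ := Module.Projective.exists_dual_int_injOn S
  set M := S.sup fun g => (β g).natAbs
  obtain ⟨q, hqM, hq⟩ := Nat.exists_infinite_primes (2 * M + 2)
  have : NeZero q := ⟨hq.ne_zero⟩
  refine ⟨q, hq, (Int.castAddHom (ZMod q)).comp β.toAddMonoidHom, fun j hj i => ?_⟩
  obtain ⟨hj1, hjq⟩ := Finset.mem_Icc.mp hj
  have hω : IsPrimitiveRoot (Complex.exp (2 * Real.pi * Complex.I * (j / q))) q :=
    Complex.isPrimitiveRoot_exp_of_coprime j q hq.ne_zero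
      ((hq.coprime_iff_not_dvd.mpr (Nat.not_dvd_of_pos_of_lt hj1 (by omega))).symm)
  have hS : ↑(p i).coeff.support ⊆ (S : Set F) := Finset.coe_subset.mpr
    (Finset.subset_biUnion_of_mem (fun i => (p i).coeff.support) (Finset.mem_univ i))
  convert hω.sum_mul_zpow_ne_zero hq (c := (p i).coeff.mapDomain β) ?_ (m := -M) ?_ using 1
  · rw [Finsupp.sum_mapDomain_index (by simp) (by intros; simp [add_mul])]
    refine Finsupp.sum_congr fun g _ => ?_
    rw [AddMonoidHom.comp_apply, Int.coe_castAddHom, LinearMap.toAddMonoidHom_coe,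
      Complex.exp_mul_val_intCast_div]
  · rw [Ne, ← Finsupp.mapDomain_zero (f := β)]
    exact fun h => hp i (AddMonoidAlgebra.coeff_eq_zero.mp
      (Finsupp.mapDomain_injOn _ (hβ.mono hS) (fun _ h => h) (by simp) h))
  · intro n hn
    obtain ⟨g, hg, rfl⟩ := Finset.mem_image.mp (Finsupp.mapDomain_support hn)
    have := Finset.le_sup (f := fun g => (β g).natAbs) (hS hg)
    simp only [Set.mem_Ico]
    omega
end

section
/- Let F be a free abelian group and let p_1, ..., p_l be finitely many nonzero elements of the integral group ring ℤ[F]. Then there exists a group homomorphism Ψ : F → ℤ such that the induced ring homomorphism ℤ[F] → ℤ[ℤ] = ℤ[s^{±1}] (sending Σ a_g·g to Σ a_g·s^{Ψ(g)}) maps each of p_1, ..., p_l to a nonzero Laurent polynomial. -/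
/-!
It suffices to find `Ψ` injective on the union of the supports of the `p i`: then no two
monomials of `p i` collide and `Ψ` maps `p i` to a nonzero Laurent polynomial. Injectivity on a
finite set means not vanishing on the finitely many differences, and over an infinite domain a
functional avoiding finitely many nonzero vectors is built one vector at a time: if `f` avoids
the old vectors and `g x ≠ 0`, then `f + c • g` avoids all of them for all but finitely
many `c`.
-/

theorem subsingleton_setOf_add_mul_eq_zero {R : Type*} [CommRing R] [NoZeroDivisors R]
    {a b : R} (hab : a ≠ 0 ∨ b ≠ 0) : {c : R | a + c * b = 0}.Subsingleton := by
  intro c (hc : a + c * b = 0) c' (hc' : a + c' * b = 0)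
  have hb : b ≠ 0 := by rintro rfl; simp_all
  have : (c - c') * b = 0 := by linear_combination hc - hc'
  exact sub_eq_zero.mp ((mul_eq_zero.mp this).resolve_right hb)

theorem exists_forall_add_mul_ne_zero {R ι : Type*} [CommRing R] [NoZeroDivisors R] [Infinite R]
    (s : Finset ι) (a b : ι → R) (hab : ∀ i ∈ s, a i ≠ 0 ∨ b i ≠ 0) :
    ∃ c : R, ∀ i ∈ s, a i + c * b i ≠ 0 := by
  have hfin : (⋃ i ∈ s, {c : R | a i + c * b i = 0}).Finite :=
    s.finite_toSet.biUnion fun i hi ↦ (subsingleton_setOf_add_mul_eq_zero (hab i hi)).finite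
  obtain ⟨c, hc⟩ := Infinite.exists_notMem_finset hfin.toFinset
  exact ⟨c, fun i hi hci ↦ hc (by simpa using ⟨i, hi, hci⟩)⟩

namespace Module.Projective

variable {R V : Type*} [CommRing R] [NoZeroDivisors R] [Infinite R] [AddCommGroup V] [Module R V]
  [Projective R V]

theorem exists_dual_forall_ne_zero (s : Finset V) (hs : ∀ v ∈ s, v ≠ 0) :
    ∃ f : Dual R V, ∀ v ∈ s, f v ≠ 0 := by
  classical
  induction s using Finset.induction with
  | empty => exact ⟨0, by simp⟩
  | @insert x s _ ih =>
    obtain ⟨f, hf⟩ := ih fun v hv ↦ hs v (Finset.mem_insert_of_mem hv)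
    obtain ⟨g, hg⟩ := exists_dual_ne_zero R (hs x (Finset.mem_insert_self x s))
    have hfg : ∀ v ∈ insert x s, f v ≠ 0 ∨ g v ≠ 0 := by
      intro v hv
      rcases Finset.mem_insert.mp hv with rfl | hv
      exacts [Or.inr hg, Or.inl (hf v hv)]
    obtain ⟨c, hc⟩ := exists_forall_add_mul_ne_zero _ _ _ hfg
    exact ⟨f + c • g, hc⟩

variable (R) in
theorem exists_dual_injOn (s : Finset V) : ∃ f : Dual R V, Set.InjOn f s := by
  classical
  obtain ⟨f, hf⟩ := exists_dual_forall_ne_zero (R := R) (s.offDiag.image fun v ↦ v.1 - v.2)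
    (by simp only [Finset.mem_image, Finset.mem_offDiag]
        rintro _ ⟨⟨v, w⟩, ⟨-, -, hne⟩, rfl⟩
        exact sub_ne_zero.mpr hne)
  refine ⟨f, fun v hv w hw hvw ↦ ?_⟩
  by_contra hne
  have hvw' : v - w ∈ s.offDiag.image fun v ↦ v.1 - v.2 :=
    Finset.mem_image.mpr ⟨(v, w), Finset.mem_offDiag.mpr ⟨hv, hw, hne⟩, rfl⟩
  exact hf _ hvw' (by rw [map_sub, hvw, sub_self])

end Module.Projective

theorem AddMonoidAlgebra.mapDomain_ne_zero {R M N : Type*} [Semiring R] {f : M → N}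
    {x : AddMonoidAlgebra R M} (hf : Set.InjOn f x.coeff.support) (hx : x ≠ 0) :
    mapDomain f x ≠ 0 := by
  rw [Ne, mapDomain, ofCoeff_eq_zero, ← Finsupp.mapDomain_zero (f := f)]
  exact fun h ↦ hx <| coeff_eq_zero.mp <|
    Finsupp.mapDomain_injOn _ hf (Set.Subset.refl _) (by simp) h

/-- Let `F` be a free abelian group and `p 1, …, p l` finitely many nonzero
elements of the integral group ring `ℤ[F]` (the monoid algebra `AddMonoidAlgebra ℤ F`).
Then there exists a group homomorphism `Ψ : F → ℤ` such that the induced ring homomorphism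
`ℤ[F] → ℤ[ℤ] = ℤ[s^{±1}]` (sending `Σ a_g·g` to `Σ a_g·s^{Ψ(g)}`) maps each `p i` to a
nonzero Laurent polynomial. -/
theorem stmt1 (F : Type*) [AddCommGroup F] [Module.Free ℤ F]
    (l : ℕ) (p : Fin l → AddMonoidAlgebra ℤ F) (hp : ∀ i, p i ≠ 0) :
    ∃ Ψ : F →+ ℤ, ∀ i : Fin l,
      AddMonoidAlgebra.mapDomainRingHom ℤ Ψ (p i) ≠ (0 : LaurentPolynomial ℤ) := by
  classical
  obtain ⟨f, hf⟩ :=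
    Module.Projective.exists_dual_injOn ℤ (Finset.univ.biUnion fun i ↦ (p i).coeff.support)
  refine ⟨f.toAddMonoidHom, fun i ↦ AddMonoidAlgebra.mapDomain_ne_zero (hf.mono ?_) (hp i)⟩
  exact Finset.coe_subset.mpr <|
    Finset.subset_biUnion_of_mem (fun i ↦ (p i).coeff.support) (Finset.mem_univ i)
end

section
/- Let p be a prime number and let g be a nontrivial element of the cyclic group ℤ/pℤ. Then the ℂ-linear endomorphism of the augmentation ideal I(ℂ) of the group algebra ℂ[ℤ/pℤ] given by v ↦ v − v·g (where v·g denotes the right action of g by multiplication in the group algebra) is invertible, i.e. a linear isomorphism. -/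
/-!
A fixed point `v = v·g` of right multiplication by a generator `g` of a finite cyclic group has
constant coefficients, so its augmentation is `|G|` times that constant; in the augmentation ideal
over a field of characteristic not dividing `|G|` it therefore vanishes. Hence `v ↦ v - v·g` is an
injective endomorphism of the finite-dimensional augmentation ideal, and so an isomorphism. For
`ℤ/pℤ` every nonzero element is a generator.
-/

/-- The augmentation homomorphism `R[G] → R`, `Σ a_g·g ↦ Σ a_g`. -/
noncomputable def augmentation (R : Type*) (G : Type*) [CommRing R] [Group G] :
    MonoidAlgebra R G →ₐ[R] R :=
  MonoidAlgebra.lift R R G 1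

/-- The augmentation ideal `I(R)` of the group algebra `R[G]`, the kernel of the
augmentation `Σ a_g·g ↦ Σ a_g`. -/
noncomputable def augmentationIdeal (R : Type*) (G : Type*) [CommRing R] [Group G] :
    Ideal (MonoidAlgebra R G) :=
  RingHom.ker (augmentation R G).toRingHom

open MonoidAlgebra

section
variable {R G : Type*} [CommRing R] [Group G]

theorem augmentation_apply (v : MonoidAlgebra R G) :
    augmentation R G v = v.coeff.sum fun _ b => b := by
  simp [augmentation, lift_apply]

@[simp]
theorem augmentation_single (g : G) (r : R) : augmentation R G (single g r) = r := by
  simp [augmentation]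

theorem mem_augmentationIdeal_iff {v : MonoidAlgebra R G} :
    v ∈ augmentationIdeal R G ↔ augmentation R G v = 0 :=
  RingHom.mem_ker

theorem sub_mul_single_mem_augmentationIdeal {v : MonoidAlgebra R G}
    (hv : v ∈ augmentationIdeal R G) (g : G) :
    v - v * single g 1 ∈ augmentationIdeal R G := by
  rw [mem_augmentationIdeal_iff] at hv ⊢
  simp [hv]

theorem coeff_eq_coeff_one_of_mul_single_eq_self {v : MonoidAlgebra R G} {g : G}
    (hgen : Subgroup.zpowers g = ⊤) (hv : v * single g 1 = v) (x : G) :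
    v.coeff x = v.coeff 1 := by
  have hstep (y : G) : v.coeff (y * g) = v.coeff y := by
    conv_lhs => rw [← hv]
    simp
  obtain ⟨k, rfl⟩ := Subgroup.mem_zpowers_iff.mp (hgen ▸ Subgroup.mem_top x)
  induction k using Int.induction_on with
  | zero => simp
  | succ k ih => rw [zpow_add_one, hstep, ih]
  | pred k ih => rw [← ih, ← hstep, ← zpow_add_one, sub_add_cancel]

theorem eq_zero_of_mem_augmentationIdeal_of_mul_single_eq_self [Fintype G] [NoZeroDivisors R]
    (hcard : (Fintype.card G : R) ≠ 0) {v : MonoidAlgebra R G} (hv : v ∈ augmentationIdeal R G)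
    {g : G} (hgen : Subgroup.zpowers g = ⊤) (hfix : v * single g 1 = v) : v = 0 := by
  have hconst := coeff_eq_coeff_one_of_mul_single_eq_self hgen hfix
  have hsum : augmentation R G v = Fintype.card G * v.coeff 1 := by
    rw [augmentation_apply, Finsupp.sum_fintype _ _ fun _ => rfl]
    simp [hconst]
  have hone : v.coeff 1 = 0 := by
    rw [mem_augmentationIdeal_iff, hsum] at hv
    exact (mul_eq_zero.mp hv).resolve_left hcard
  ext x
  simp [hconst, hone]

end

section
variable {K G : Type*} [Field K] [Group G]

noncomputable def augmentationIdeal.subMulSingle (g : G) :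
    augmentationIdeal K G →ₗ[K] augmentationIdeal K G
  where
  toFun v := ⟨v.1 - v.1 * single g 1, sub_mul_single_mem_augmentationIdeal v.2 g⟩
  map_add' v w := Subtype.ext (by simp only [Submodule.coe_add, add_mul, add_sub_add_comm])
  map_smul' c v := Subtype.ext (by simp [smul_sub])

theorem augmentationIdeal.subMulSingle_injective [Fintype G]
    (hcard : (Fintype.card G : K) ≠ 0) {g : G} (hgen : Subgroup.zpowers g = ⊤) :
    Function.Injective (augmentationIdeal.subMulSingle (K := K) g) := by
  rw [← LinearMap.ker_eq_bot, LinearMap.ker_eq_bot']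
  intro v hv
  refine Subtype.ext (eq_zero_of_mem_augmentationIdeal_of_mul_single_eq_self hcard v.2 hgen ?_)
  exact (sub_eq_zero.mp (congrArg Subtype.val hv)).symm

end

/-- Let `p` be a prime and `g` a nontrivial element of `ℤ/pℤ`. Then the
`ℂ`-linear endomorphism of the augmentation ideal `I(ℂ)` of `ℂ[ℤ/pℤ]` given by
`v ↦ v - v·g` is invertible, i.e. a linear isomorphism: there is a `ℂ`-linear
automorphism of `I(ℂ)` whose underlying map is `v ↦ v - v·g`. -/
theorem stmt4 (p : ℕ) (hp : p.Prime) (g : ZMod p) (hg : g ≠ 0) :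
    ∃ e : augmentationIdeal ℂ (Multiplicative (ZMod p)) ≃ₗ[ℂ]
          augmentationIdeal ℂ (Multiplicative (ZMod p)),
      ∀ v : augmentationIdeal ℂ (Multiplicative (ZMod p)),
        (e v : MonoidAlgebra ℂ (Multiplicative (ZMod p)))
          = (v : MonoidAlgebra ℂ (Multiplicative (ZMod p)))
            - (v : MonoidAlgebra ℂ (Multiplicative (ZMod p)))
              * MonoidAlgebra.single (Multiplicative.ofAdd g) 1 := by
  have := Fact.mk hp
  have : NeZero p := ⟨hp.ne_zero⟩
  have hcard : Nat.card (Multiplicative (ZMod p)) = p := by simp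
  have hgen := zpowers_eq_top_of_prime_card hcard (g := Multiplicative.ofAdd g) hg
  have hcard_ne_zero : (Fintype.card (Multiplicative (ZMod p)) : ℂ) ≠ 0 := by
    rw [← Nat.card_eq_fintype_card, hcard]
    exact_mod_cast hp.ne_zero
  exact ⟨.ofInjectiveEndo _ (augmentationIdeal.subMulSingle_injective hcard_ne_zero hgen),
    fun _ => rfl⟩
end

section
/- Let p and q be two distinct prime numbers with q > 2, and let 𝔽_q be the field with q elements. For every nontrivial element g of the cyclic group ℤ/pℤ, the 𝔽_q-linear endomorphism of the augmentation ideal I(𝔽_q) of the group algebra 𝔽_q[ℤ/pℤ] given by v ↦ v − v·g is invertible, i.e. a linear isomorphism. -/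
/-!
If `v ∈ I(R)` satisfies `v = v·g`, its coefficients are invariant under right translation
by `g`; when `g` generates `G` they all equal some `c`, and the augmentation of `v` is `|G|·c`.
So `v = 0` whenever `|G|` is not a zero divisor in `R`: the map `v ↦ v - v·g` is injective on
`I(R)`, hence bijective over a field, where `I(R)` is finite-dimensional. For `G = ℤ/pℤ` every
`g ≠ 0` generates, and `p ≠ 0` in `𝔽_q` because `p ≠ q`.
-/

open MonoidAlgebra

variable {R G : Type*} [CommRing R] [Group G]

lemma augmentation_apply_s5 [Fintype G] (v : MonoidAlgebra R G) :
    augmentation R G v = ∑ x, v.coeff x := by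
  simp [augmentation, MonoidAlgebra.lift_apply, Finsupp.sum_fintype]

namespace MonoidAlgebra

lemma coeff_mul_pow_of_mul_single_eq {v : MonoidAlgebra R G} {g : G}
    (hv : v * single g 1 = v) (x : G) (n : ℕ) : v.coeff (x * g ^ n) = v.coeff x := by
  induction n generalizing x with
  | zero => simp
  | succ n ih =>
    have hstep : v.coeff (x * g) = v.coeff x := by
      simpa using congr(($hv).coeff (x * g)).symm
    rw [pow_succ', ← mul_assoc, ih, hstep]

lemma coeff_eq_coeff_one_of_mul_single_eq {v : MonoidAlgebra R G} {g : G}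
    (hg : ∀ x, x ∈ Submonoid.powers g) (hv : v * single g 1 = v) (x : G) :
    v.coeff x = v.coeff 1 := by
  obtain ⟨n, rfl⟩ := hg x
  simpa using coeff_mul_pow_of_mul_single_eq hv 1 n

end MonoidAlgebra

namespace augmentationIdeal

instance : (augmentationIdeal R G).IsTwoSided :=
  inferInstanceAs (RingHom.ker _).IsTwoSided

lemma eq_zero_of_mul_single_eq [Fintype G] [NoZeroDivisors R]
    (hcard : (Fintype.card G : R) ≠ 0) {g : G} (hg : ∀ x, x ∈ Submonoid.powers g)
    {v : MonoidAlgebra R G} (hI : v ∈ augmentationIdeal R G) (hv : v * single g 1 = v) :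
    v = 0 := by
  have hconst := coeff_eq_coeff_one_of_mul_single_eq hg hv
  have hsum : (Fintype.card G : R) * v.coeff 1 = 0 := by
    have : augmentation R G v = 0 := hI
    simpa [augmentation_apply_s5, hconst] using this
  have hc : v.coeff 1 = 0 := (mul_eq_zero.mp hsum).resolve_left hcard
  ext x
  simp [hconst x, hc]

variable (R) in
noncomputable def subMulSingle_s5 (g : G) : augmentationIdeal R G →ₗ[R] augmentationIdeal R G where
  toFun v := ⟨(v : MonoidAlgebra R G) - (v : MonoidAlgebra R G) * single g 1,
    sub_mem v.2 ((augmentationIdeal R G).mul_mem_right _ v.2)⟩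
  map_add' v w := Subtype.ext (by simp only [Submodule.coe_add]; noncomm_ring)
  map_smul' c v := Subtype.ext (by simp [smul_sub])

lemma injective_subMulSingle [Fintype G] [NoZeroDivisors R] (hcard : (Fintype.card G : R) ≠ 0)
    {g : G} (hg : ∀ x, x ∈ Submonoid.powers g) : Function.Injective (subMulSingle_s5 R g) := by
  refine (injective_iff_map_eq_zero _).mpr fun v hv => Subtype.ext ?_
  exact eq_zero_of_mul_single_eq hcard hg v.2 (sub_eq_zero.mp (congr_arg Subtype.val hv)).symm

lemma bijective_subMulSingle {K : Type*} [Field K] [Fintype G] (hcard : (Fintype.card G : K) ≠ 0)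
    {g : G} (hg : ∀ x, x ∈ Submonoid.powers g) : Function.Bijective (subMulSingle_s5 K g) :=
  have hinj := injective_subMulSingle hcard hg
  ⟨hinj, LinearMap.injective_iff_surjective.mp hinj⟩

end augmentationIdeal

theorem stmt5_general (p q : ℕ) (hp : p.Prime) (hq : q.Prime) (hpq : p ≠ q)
    (g : ZMod p) (hg : g ≠ 0) :
    ∃ e : augmentationIdeal (ZMod q) (Multiplicative (ZMod p)) ≃ₗ[ZMod q]
          augmentationIdeal (ZMod q) (Multiplicative (ZMod p)),
      ∀ v : augmentationIdeal (ZMod q) (Multiplicative (ZMod p)),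
        (e v : MonoidAlgebra (ZMod q) (Multiplicative (ZMod p)))
          = (v : MonoidAlgebra (ZMod q) (Multiplicative (ZMod p)))
            - (v : MonoidAlgebra (ZMod q) (Multiplicative (ZMod p)))
              * MonoidAlgebra.single (Multiplicative.ofAdd g) 1 := by
  have : Fact p.Prime := ⟨hp⟩
  have : Fact q.Prime := ⟨hq⟩
  have hgen : ∀ x, x ∈ Submonoid.powers (Multiplicative.ofAdd g) := fun _ =>
    mem_powers_of_prime_card (p := p) (by simp) (by simpa using hg)
  have hcard : (Fintype.card (Multiplicative (ZMod p)) : ZMod q) ≠ 0 := by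
    rw [Fintype.card_multiplicative, ZMod.card, Ne, ZMod.natCast_eq_zero_iff,
      Nat.prime_dvd_prime_iff_eq hq hp]
    exact hpq.symm
  exact ⟨.ofBijective _ (augmentationIdeal.bijective_subMulSingle hcard hgen), fun _ => rfl⟩

/-- Let `p` and `q` be distinct primes with `q > 2`, and `𝔽_q = ZMod q` the
field with `q` elements. For every nontrivial element `g` of `ℤ/pℤ`, the `𝔽_q`-linear
endomorphism of the augmentation ideal `I(𝔽_q)` of `𝔽_q[ℤ/pℤ]` given by `v ↦ v - v·g`
is invertible, i.e. a linear isomorphism: there is an `𝔽_q`-linear automorphism of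
`I(𝔽_q)` whose underlying map is `v ↦ v - v·g`. -/
theorem stmt5 (p q : ℕ) (hp : p.Prime) (hq : q.Prime) (hpq : p ≠ q) (hq2 : 2 < q)
    (g : ZMod p) (hg : g ≠ 0) :
    ∃ e : augmentationIdeal (ZMod q) (Multiplicative (ZMod p)) ≃ₗ[ZMod q]
          augmentationIdeal (ZMod q) (Multiplicative (ZMod p)),
      ∀ v : augmentationIdeal (ZMod q) (Multiplicative (ZMod p)),
        (e v : MonoidAlgebra (ZMod q) (Multiplicative (ZMod p)))
          = (v : MonoidAlgebra (ZMod q) (Multiplicative (ZMod p)))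
            - (v : MonoidAlgebra (ZMod q) (Multiplicative (ZMod p)))
              * MonoidAlgebra.single (Multiplicative.ofAdd g) 1 :=
  stmt5_general p q hp hq hpq g hg
end
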